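/- Let S be a monoid, A an S-act, and Σ = Σ(X) a set of equations over A. Let κ_Σ be the congruence on the disjoint union A ⊔ F_S(X) generated by H(Σ) ∪ K(Σ), where K(Σ) = {(xs, a) : xs = a ∈ Σ}, and let A(Σ) = (A ⊔ F_S(X))/κ_Σ. Then Σ is consistent if and only if the natural map ν_Σ : A → A(Σ), a ↦ [a], is injective. -/

import Mathlib

universe u v w

/-- A right `S`-act: a set with an action `A × S → A` with `a·1 = a`, `a·(st) = (a·s)·t`. -/
class RAct (S : Type u) [Monoid S] (A : Type v) where
  act : A → S → A
  act_one : ∀ a : A, act a 1 = a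
  act_mul : ∀ (a : A) (s t : S), act a (s * t) = act (act a s) t

infixl:70 " ⊳ " => RAct.act

/-- An `S`-morphism of right `S`-acts. -/
def IsRActHom (S : Type u) [Monoid S] {A : Type v} {B : Type w}
    [RAct S A] [RAct S B] (f : A → B) : Prop :=
  ∀ (a : A) (s : S), f (a ⊳ s) = f a ⊳ s

/-- The free `S`-act `F_S(X) = X × S`, with `(x,s)·t = (x, st)`. -/
instance freeAct (S : Type u) [Monoid S] (X : Type w) : RAct S (X × S) where
  act p s := (p.1, p.2 * s)
  act_one p := by simp
  act_mul p s t := by simp [mul_assoc]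

/-- Disjoint union of two `S`-acts. -/
instance sumAct (S : Type u) [Monoid S] {A : Type v} {B : Type w} [RAct S A] [RAct S B] :
    RAct S (A ⊕ B) where
  act x s := Sum.elim (fun a => Sum.inl (a ⊳ s)) (fun b => Sum.inr (b ⊳ s)) x
  act_one := by rintro (a | b) <;> simp [RAct.act_one]
  act_mul := by rintro (a | b) s t <;> simp [RAct.act_mul]

/-- Congruence on a right `S`-act. -/
structure IsActCongr (S : Type u) [Monoid S] {A : Type v} [RAct S A]
    (r : A → A → Prop) : Prop where
  refl : ∀ a, r a a
  symm : ∀ {a b}, r a b → r b a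
  trans : ∀ {a b c}, r a b → r b c → r a c
  act : ∀ {a b} (s : S), r a b → r (a ⊳ s) (b ⊳ s)

/-- The act congruence generated by a set of pairs `H`. -/
def congGen (S : Type u) [Monoid S] {A : Type v} [RAct S A]
    (H : Set (A × A)) (a b : A) : Prop :=
  ∀ r : A → A → Prop, IsActCongr S r → (∀ p ∈ H, r p.1 p.2) → r a b

theorem isActCongr_congGen (S : Type u) [Monoid S] {A : Type v} [RAct S A]
    (H : Set (A × A)) : IsActCongr S (congGen S H) where
  refl a := fun _r hr _ => hr.refl a
  symm h := fun r hr hH => hr.symm (h r hr hH)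
  trans h1 h2 := fun r hr hH => hr.trans (h1 r hr hH) (h2 r hr hH)
  act s h := fun r hr hH => hr.act s (h r hr hH)

/-- Equations over an `S`-act `A` with variables from `X`:
`xs = yt` (which includes `xs = xt`) or `xs = a`. -/
inductive Eqn (S : Type u) (A : Type v) (X : Type w) where
  | vv : X → S → X → S → Eqn S A X
  | vc : X → S → A → Eqn S A X

/-- `b : X → C` is a solution of `E` in the act `C`, where `ι : A → C` interprets constants. -/
def IsSolution (S : Type u) [Monoid S] {A : Type v} {X : Type w} {C : Type*}
    [RAct S C] (ι : A → C) (E : Set (Eqn S A X)) (b : X → C) : Prop :=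
  (∀ x s y t, Eqn.vv x s y t ∈ E → b x ⊳ s = b y ⊳ t) ∧
  (∀ x s a, Eqn.vc x s a ∈ E → b x ⊳ s = ι a)

/-- A set of equations over `A` is consistent if it has a solution in some act containing `A`. -/
def Consistent (S : Type u) [Monoid S] {A : Type v} {X : Type w} [RAct S A]
    (E : Set (Eqn S A X)) : Prop :=
  ∃ (B : Type (max u v w)) (_ : RAct S B) (ι : A → B),
    Function.Injective ι ∧ IsRActHom S ι ∧ ∃ b : X → B, IsSolution S ι E b

/-- `A` is `n`-absolutely pure: every finite consistent system of equations over `A`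
in at most `n` variables has a solution in `A`. -/
def NPure (S : Type u) [Monoid S] (A : Type v) [RAct S A] (n : ℕ) : Prop :=
  ∀ E : Set (Eqn S A (Fin n)), E.Finite → Consistent S E →
    ∃ c : Fin n → A, IsSolution S id E c

/-- Almost pure: 1-absolutely pure. -/
def AlmostPure (S : Type u) [Monoid S] (A : Type v) [RAct S A] : Prop :=
  NPure S A 1

/-- Absolutely pure: `n`-absolutely pure for every `n`. -/
def AbsolutelyPure (S : Type u) [Monoid S] (A : Type v) [RAct S A] : Prop :=
  ∀ n : ℕ, NPure S A n

/-- The pairs `H(Σ)` in the free act coming from constant-free equations of `E`. -/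
def Hcf (S : Type u) [Monoid S] {A : Type v} {X : Type w}
    (E : Set (Eqn S A X)) : Set ((X × S) × (X × S)) :=
  {p | ∃ x u y v, Eqn.vv x u y v ∈ E ∧ p = ((x, u), (y, v))}

/-- The pairs `H(Σ) ∪ K(Σ)` on the disjoint union `A ⊔ F_S(X)`. -/
def HK (S : Type u) [Monoid S] {A : Type v} {X : Type w}
    (E : Set (Eqn S A X)) : Set ((A ⊕ X × S) × (A ⊕ X × S)) :=
  {p | (∃ x u y v, Eqn.vv x u y v ∈ E ∧ p = (Sum.inr (x, u), Sum.inr (y, v))) ∨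
       (∃ x s a, Eqn.vc x s a ∈ E ∧ p = (Sum.inr (x, s), Sum.inl a))}

/-- Quotient of an act by a generated congruence. -/
instance quotAct (S : Type u) [Monoid S] {A : Type v} [RAct S A] (H : Set (A × A)) :
    RAct S (Quot (congGen S H)) where
  act q s := Quot.map (fun a => a ⊳ s) (fun _a _b h => (isActCongr_congGen S H).act s h) q
  act_one := by
    rintro ⟨a⟩
    show Quot.mk _ (a ⊳ (1 : S)) = Quot.mk _ a
    rw [RAct.act_one]
  act_mul := by
    rintro ⟨a⟩ s t
    show Quot.mk _ (a ⊳ (s * t)) = Quot.mk _ (a ⊳ s ⊳ t)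
    rw [RAct.act_mul]

/-- The canonical extension `A(Σ) = (A ⊔ F_S(X)) / κ_Σ`. -/
abbrev ActExt (S : Type u) [Monoid S] {A : Type v} {X : Type w} [RAct S A]
    (E : Set (Eqn S A X)) : Type (max u v w) :=
  Quot (congGen S (HK S E))

/-- The natural map `ν_Σ : A → A(Σ)`. -/
def extOfBase (S : Type u) [Monoid S] {A : Type v} {X : Type w} [RAct S A]
    (E : Set (Eqn S A X)) (a : A) : ActExt S E :=
  Quot.mk _ (Sum.inl a)

/-- A finitely generated `S`-act. -/
def IsFG (S : Type u) [Monoid S] (A : Type v) [RAct S A] : Prop :=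
  ∃ T : Finset A, ∀ a : A, ∃ t ∈ T, ∃ s : S, a = t ⊳ s

/-- A monogenic (cyclic) `S`-act. -/
def Monogenic (S : Type u) [Monoid S] (C : Type v) [RAct S C] : Prop :=
  ∃ c : C, ∀ y : C, ∃ s : S, y = c ⊳ s

/-- `A` embeds into `C` as an `S`-act. -/
def ActEmbeds (S : Type u) [Monoid S] (A : Type v) (C : Type w) [RAct S A] [RAct S C] : Prop :=
  ∃ ι : A → C, IsRActHom S ι ∧ Function.Injective ι

/-- A finitely presented `S`-act: isomorphic to `F_S(X)/ρ` with `X` finite and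
`ρ` a finitely generated congruence. -/
def IsFP (S : Type u) [Monoid S] (A : Type v) [RAct S A] : Prop :=
  ∃ (n : ℕ) (H : Set ((Fin n × S) × (Fin n × S))), H.Finite ∧
    ∃ φ : Fin n × S → A, IsRActHom S φ ∧ Function.Surjective φ ∧
      ∀ p q : Fin n × S, φ p = φ q ↔ congGen S H p q

/-- A right coherent monoid. -/
def RightCoherent (S : Type u) [Monoid S] : Prop :=
  ∀ (A B : Type u) (_ : RAct S A) (_ : RAct S B) (ι : B → A),
    IsRActHom S ι → Function.Injective ι → IsFP S A → IsFG S B → IsFP S B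

/-- The fem-property: every finitely generated `S`-act embeds into a monogenic act. -/
def FemProperty (S : Type u) [Monoid S] : Prop :=
  ∀ (A : Type u) (_ : RAct S A), IsFG S A → ∃ (C : Type u) (_ : RAct S C),
    Monogenic S C ∧ ActEmbeds S A C

/-- A subact of an `S`-act. -/
structure Subact (S : Type u) [Monoid S] (B : Type v) [RAct S B] where
  carrier : Set B
  closed : ∀ b ∈ carrier, ∀ s : S, b ⊳ s ∈ carrier

instance subAct (S : Type u) [Monoid S] {B : Type v} [RAct S B] (T : Subact S B) :
    RAct S T.carrier where
  act a s := ⟨a.1 ⊳ s, T.closed a.1 a.2 s⟩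
  act_one a := Subtype.ext (RAct.act_one a.1)
  act_mul a s t := Subtype.ext (RAct.act_mul a.1 s t)


def BuiltFrom (S : Type u) [Monoid S] {A B : Type v} [RAct S A] [RAct S B]
    (ι : A → B) (P : ℕ → Prop) : Prop :=
  IsRActHom S ι ∧ Function.Injective ι ∧
  ∃ (ξ : Ordinal.{v}) (C : Ordinal.{v} → Subact S B),
    (C 0).carrier = Set.range ι ∧
    (∀ i j : Ordinal.{v}, i ≤ j → (C i).carrier ⊆ (C j).carrier) ∧
    (C ξ).carrier = Set.univ ∧
    (∀ ζ : Ordinal.{v}, ζ ≤ ξ → Order.IsSuccLimit ζ → (C ζ).carrier = ⋃ i ∈ Set.Iio ζ, (C i).carrier) ∧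
    (∀ i : Ordinal.{v}, i < ξ → ∃ m : ℕ, P m ∧
      (∃ E : Set (Eqn S (↥(C i).carrier) (Fin m)), Consistent S E ∧
        (∃ e : ActExt S E → B, IsRActHom S e ∧ Function.Injective e ∧
          Set.range e = (C (i + 1)).carrier ∧
          (∀ d : ↥(C i).carrier, e (extOfBase S E d) = d.1))))

/-! A solution `b` of `Σ` in an act `B ⊇ A` extends to the `S`-morphism `A ⊔ F_S(X) → B`,
`a ↦ a`, `(x, s) ↦ b x ⊳ s`, which identifies every pair of `H(Σ) ∪ K(Σ)`. It therefore factors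
through `A(Σ)`, and composed with `ν_Σ` it is the embedding `A → B`, so `ν_Σ` is injective.
Conversely, if `ν_Σ` is injective then `A(Σ)` is an act containing `A` in which the classes `[x]`
solve `Σ`. -/

section RAct

variable {S : Type u} [Monoid S]

theorem congGen_of_mem {A : Type v} [RAct S A] {H : Set (A × A)} {a a' : A} (h : (a, a') ∈ H) :
    congGen S H a a' :=
  fun _ _ hH => hH _ h

theorem IsRActHom.isActCongr_ker {A : Type v} {B : Type w} [RAct S A] [RAct S B] {f : A → B}
    (hf : IsRActHom S f) : IsActCongr S (fun a a' => f a = f a') where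
  refl _ := rfl
  symm := Eq.symm
  trans := Eq.trans
  act s h := by rw [hf, hf, h]

theorem IsRActHom.eq_of_congGen {A : Type v} {B : Type w} [RAct S A] [RAct S B] {f : A → B}
    (hf : IsRActHom S f) {H : Set (A × A)} (hH : ∀ p ∈ H, f p.1 = f p.2) {a a' : A}
    (h : congGen S H a a') : f a = f a' :=
  h _ hf.isActCongr_ker hH

theorem IsRActHom.sumElim {A : Type v} {B : Type w} {C : Type*} [RAct S A] [RAct S B] [RAct S C]
    {f : A → C} {g : B → C} (hf : IsRActHom S f) (hg : IsRActHom S g) :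
    IsRActHom S (Sum.elim f g) := by
  rintro (a | b) s
  exacts [hf a s, hg b s]

def freeLift {X : Type w} {B : Type v} [RAct S B] (b : X → B) (p : X × S) : B :=
  b p.1 ⊳ p.2

theorem isRActHom_freeLift {X : Type w} {B : Type v} [RAct S B] (b : X → B) :
    IsRActHom S (freeLift (S := S) b) :=
  fun p t => RAct.act_mul (b p.1) p.2 t

end RAct

section Extension

variable {S : Type u} [Monoid S] {A : Type v} {X : Type w} [RAct S A]

theorem isRActHom_extOfBase (E : Set (Eqn S A X)) : IsRActHom S (extOfBase S E) :=
  fun _ _ => rfl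

def varClass (E : Set (Eqn S A X)) (x : X) : ActExt S E :=
  Quot.mk _ (Sum.inr (x, 1))

theorem varClass_act (E : Set (Eqn S A X)) (x : X) (s : S) :
    varClass E x ⊳ s = Quot.mk _ (Sum.inr (x, s)) := by
  show Quot.mk _ (Sum.inr (x, 1 * s)) = _
  rw [one_mul]

theorem isSolution_varClass (E : Set (Eqn S A X)) :
    IsSolution S (extOfBase S E) E (varClass E) := by
  constructor
  · intro x s y t h
    rw [varClass_act, varClass_act]
    exact Quot.sound (congGen_of_mem (Or.inl ⟨x, s, y, t, h, rfl⟩))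
  · intro x s a h
    rw [varClass_act]
    exact Quot.sound (congGen_of_mem (Or.inr ⟨x, s, a, h, rfl⟩))

theorem injective_extOfBase_of_isSolution {E : Set (Eqn S A X)} {B : Type*} [RAct S B]
    {ι : A → B} (hι : Function.Injective ι) (hhom : IsRActHom S ι) {b : X → B}
    (hb : IsSolution S ι E b) : Function.Injective (extOfBase S E) := by
  set f : A ⊕ X × S → B := Sum.elim ι (freeLift b)
  have hf : IsRActHom S f := hhom.sumElim (isRActHom_freeLift b)
  have hHK : ∀ p ∈ HK S E, f p.1 = f p.2 := by
    rintro p (⟨x, s, y, t, h, rfl⟩ | ⟨x, s, a, h, rfl⟩)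
    exacts [hb.1 x s y t h, hb.2 x s a h]
  intro a a' h
  exact hι (congrArg (Quot.lift f fun _ _ => hf.eq_of_congGen hHK) h)

end Extension

theorem consistent_iff_injective (S : Type u) [Monoid S] (A : Type v) (X : Type w)
    [RAct S A] (E : Set (Eqn S A X)) :
    Consistent S E ↔ Function.Injective (extOfBase S E) := by
  constructor
  · rintro ⟨B, _, ι, hι, hhom, b, hb⟩
    exact injective_extOfBase_of_isSolution hι hhom hb
  · intro hν
    exact ⟨ActExt S E, inferInstance, extOfBase S E, hν, isRActHom_extOfBase E, varClass E,
      isSolution_varClass E⟩
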